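/- Assume the primal-dual pair {(P),(D)} (with data c ∈ X*, b ∈ Y*) is consistent and the value v of the game G = (α,β,A) (for some α ∈ int C*, β ∈ int K*) equals 0. Then (D) is strictly feasible if and only if every x ∈ S with Ax ∈ K* satisfies ⟨c,x⟩ > 0, where S := {x ∈ C : ⟨α,x⟩ = 1}. -/

import Mathlib

/-!
If `y` is strictly feasible, then `c x = (c - A*y) x + ⟨y, A x⟩`, and the first term is positive
at every nonzero `x ∈ C` because interior points of `C*` are. Conversely, if no strictly feasible
`y` exists, `c` lies outside the open convex set `A*K + int C*`, so Hahn–Banach and reflexivity of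
`X` give `x₀` with `⟨y, A x₀⟩ + w x₀ < c x₀` for all `y ∈ K`, `w ∈ int C*`. Scaling `y` and `w`
shows that `-x₀` is nonnegative on `C*` (so lies in `C` by the bipolar theorem), that
`A (-x₀) ∈ K*` and that `c (-x₀) ≤ 0`; normalized by `α`, `-x₀` is a point of `S` at which the
right-hand side fails.
-/

open Set Pointwise

lemma nonpos_of_forall_pos_mul_add_lt {a b d : ℝ} (h : ∀ t : ℝ, 0 < t → t * a + b < d) :
    a ≤ 0 := by
  by_contra! ha
  have := h ((|d - b| + 1) / a) (by positivity)
  rw [div_mul_cancel₀ _ ha.ne'] at this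
  linarith [le_abs_self (d - b)]

lemma nonneg_of_forall_pos_mul_lt {a d : ℝ} (h : ∀ t : ℝ, 0 < t → t * a < d) : 0 ≤ d := by
  by_contra! hd
  have ha : a < 0 := by linarith [h 1 one_pos]
  have := h (d / (2 * a)) (div_pos_of_neg_of_neg hd (by linarith))
  rw [div_mul_eq_mul_div, mul_div_mul_right _ _ ha.ne] at this
  linarith

section Cone

variable {X : Type*} [NormedAddCommGroup X] [NormedSpace ℝ X] {C : Set X}

lemma zero_mem_of_smul_mem (hC : ∀ r : ℝ, 0 ≤ r → ∀ x ∈ C, r • x ∈ C) (hne : C.Nonempty) :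
    (0 : X) ∈ C := by
  obtain ⟨x, hx⟩ := hne
  simpa using hC 0 le_rfl x hx

def properConeOfConvex (hC0 : (0 : X) ∈ C) (hCcone : ∀ r : ℝ, 0 ≤ r → ∀ x ∈ C, r • x ∈ C)
    (hCconv : Convex ℝ C) (hCclosed : IsClosed C) : ProperCone ℝ X where
  carrier := C
  add_mem' {x y} hx hy := by
    have hmid := hCconv hx hy (by norm_num : (0 : ℝ) ≤ 1 / 2) (by norm_num : (0 : ℝ) ≤ 1 / 2)
      (by norm_num)
    simpa [smul_add, smul_smul] using hCcone 2 zero_le_two _ hmid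
  zero_mem' := hC0
  smul_mem' r x hx := hCcone r r.2 x hx
  isClosed' := hCclosed

def dualCone (C : Set X) : Set (X →L[ℝ] ℝ) := {w | ∀ x ∈ C, 0 ≤ w x}

lemma convex_dualCone : Convex ℝ (dualCone C) := by
  intro w hw v hv a b ha hb _ x hx
  simpa using add_nonneg (mul_nonneg ha (hw x hx)) (mul_nonneg hb (hv x hx))

lemma smul_mem_dualCone {w : X →L[ℝ] ℝ} {t : ℝ} (ht : 0 ≤ t) (hw : w ∈ dualCone C) :
    t • w ∈ dualCone C :=
  fun x hx => by simpa using mul_nonneg ht (hw x hx)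

lemma add_mem_interior_dualCone {w v : X →L[ℝ] ℝ} (hw : w ∈ interior (dualCone C))
    (hv : v ∈ dualCone C) : w + v ∈ interior (dualCone C) := by
  have hsum : dualCone C + dualCone C ⊆ dualCone C := by
    rintro _ ⟨w, hw, v, hv, rfl⟩ x hx
    simpa using add_nonneg (hw x hx) (hv x hx)
  exact interior_mono hsum (subset_interior_add_left (add_mem_add hw hv))

lemma smul_mem_interior_dualCone {w : X →L[ℝ] ℝ} {t : ℝ} (ht : 0 < t)
    (hw : w ∈ interior (dualCone C)) : t • w ∈ interior (dualCone C) := by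
  have hscale : t • dualCone C ⊆ dualCone C := by
    rintro _ ⟨v, hv, rfl⟩
    exact smul_mem_dualCone ht.le hv
  exact interior_mono hscale ((interior_smul₀ ht.ne' (dualCone C)).symm ▸ smul_mem_smul_set hw)

lemma pos_of_mem_interior_dualCone {w : X →L[ℝ] ℝ} (hw : w ∈ interior (dualCone C)) {x : X}
    (hx : x ∈ C) (hx0 : x ≠ 0) : 0 < w x := by
  obtain ⟨ε, hε, hball⟩ := Metric.mem_nhds_iff.1 (mem_interior_iff_mem_nhds.1 hw)
  obtain ⟨g, hg, hgx⟩ := exists_dual_vector ℝ x (norm_ne_zero_iff.2 hx0)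
  -- `w - (ε / 2) g` still lies in the dual cone and takes the value `w x - (ε / 2) ‖x‖` at `x`
  have hmem : w - (ε / 2) • g ∈ Metric.ball w ε := by
    rw [Metric.mem_ball, dist_eq_norm, sub_sub_cancel_left, norm_neg, norm_smul, hg,
      Real.norm_of_nonneg (by positivity)]
    linarith
  have hle := hball hmem x hx
  simp only [sub_apply, smul_apply, smul_eq_mul] at hle
  have hnx : 0 < ‖x‖ := norm_pos_iff.2 hx0
  rw [show g x = ‖x‖ by exact_mod_cast hgx] at hle
  nlinarith

lemma mem_of_forall_mem_dualCone_nonneg (hC0 : (0 : X) ∈ C)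
    (hCcone : ∀ r : ℝ, 0 ≤ r → ∀ x ∈ C, r • x ∈ C) (hCconv : Convex ℝ C) (hCclosed : IsClosed C)
    {x : X} (h : ∀ w ∈ dualCone C, 0 ≤ w x) : x ∈ C := by
  by_contra hx
  obtain ⟨w, hwC, hwx⟩ :=
    (properConeOfConvex hC0 hCcone hCconv hCclosed).hyperplane_separation_point hx
  exact (h w hwC).not_gt hwx

end Cone

lemma exists_forall_apply_lt_of_notMem {X : Type*} [NormedAddCommGroup X] [NormedSpace ℝ X]
    (hXrefl : Function.Surjective (NormedSpace.inclusionInDoubleDual ℝ X))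
    {U : Set (X →L[ℝ] ℝ)} (hUconv : Convex ℝ U) (hUopen : IsOpen U) {c : X →L[ℝ] ℝ}
    (hc : c ∉ U) : ∃ x : X, ∀ w ∈ U, w x < c x := by
  obtain ⟨Φ, hΦ⟩ := geometric_hahn_banach_open_point hUconv hUopen hc
  obtain ⟨x, rfl⟩ := hXrefl Φ
  exact ⟨x, hΦ⟩

theorem exists_primal_ray_of_not_strictlyFeasible {X Y : Type*} [NormedAddCommGroup X]
    [NormedSpace ℝ X] [NormedAddCommGroup Y] [NormedSpace ℝ Y]
    (hXrefl : Function.Surjective (NormedSpace.inclusionInDoubleDual ℝ X))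
    (A : X →L[ℝ] (Y →L[ℝ] ℝ)) {C : Set X} {K : Set Y} (hC0 : (0 : X) ∈ C)
    (hCcone : ∀ r : ℝ, 0 ≤ r → ∀ x ∈ C, r • x ∈ C) (hCconv : Convex ℝ C) (hCclosed : IsClosed C)
    (hK0 : (0 : Y) ∈ K) (hKcone : ∀ r : ℝ, 0 ≤ r → ∀ y ∈ K, r • y ∈ K) (hKconv : Convex ℝ K)
    {c α : X →L[ℝ] ℝ} (hα : α ∈ interior (dualCone C))
    (h : ¬∃ y ∈ K, -(A.flip y) + c ∈ interior (dualCone C)) :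
    ∃ x ∈ C, 0 < α x ∧ A x ∈ dualCone K ∧ c x ≤ 0 := by
  have hc : c ∉ A.flip '' K + interior (dualCone C) := by
    rintro ⟨_, ⟨y, hy, rfl⟩, w, hw, hsum⟩
    exact h ⟨y, hy, by rwa [← hsum, neg_add_cancel_left]⟩
  obtain ⟨x₀, hx₀⟩ := exists_forall_apply_lt_of_notMem hXrefl
    ((hKconv.linear_image A.flip.toLinearMap).add convex_dualCone.interior)
    isOpen_interior.add_left hc
  have hsep : ∀ y ∈ K, ∀ w ∈ interior (dualCone C), A x₀ y + w x₀ < c x₀ := fun y hy w hw => by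
    simpa using hx₀ _ (add_mem_add (mem_image_of_mem _ hy) hw)
  have hAx₀ : ∀ y ∈ K, A x₀ y ≤ 0 := fun y hy =>
    nonpos_of_forall_pos_mul_add_lt fun t ht => by
      simpa using hsep (t • y) (hKcone t ht.le y hy) α hα
  have hwx₀ : ∀ w ∈ dualCone C, w x₀ ≤ 0 := fun w hw =>
    nonpos_of_forall_pos_mul_add_lt fun t ht => by
      simpa [add_comm] using
        hsep 0 hK0 _ (add_mem_interior_dualCone hα (smul_mem_dualCone ht.le hw))
  have hcx₀ : 0 ≤ c x₀ := nonneg_of_forall_pos_mul_lt fun t ht => by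
    simpa using hsep 0 hK0 _ (smul_mem_interior_dualCone ht hα)
  have hx₀0 : x₀ ≠ 0 := by
    rintro rfl
    simpa using hsep 0 hK0 α hα
  have hx : -x₀ ∈ C := mem_of_forall_mem_dualCone_nonneg hC0 hCcone hCconv hCclosed
    fun w hw => by simpa using hwx₀ w hw
  exact ⟨-x₀, hx, pos_of_mem_interior_dualCone hα hx (neg_ne_zero.2 hx₀0),
    fun y hy => by simpa using hAx₀ y hy, by simpa using hcx₀⟩

theorem stmt13_general
    {X Y : Type*} [NormedAddCommGroup X] [NormedSpace ℝ X]
    [NormedAddCommGroup Y] [NormedSpace ℝ Y]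
    -- reflexivity of X and Y
    (hXrefl : Function.Surjective (NormedSpace.inclusionInDoubleDual ℝ X))
    (A : X →L[ℝ] (Y →L[ℝ] ℝ))
    -- closed convex cones C, K with solid dual cones
    (C : Set X) (K : Set Y)
    (hCcone : ∀ (r : ℝ), 0 ≤ r → ∀ x ∈ C, r • x ∈ C) (hCconv : Convex ℝ C)
    (hCclosed : IsClosed C)
    (hKcone : ∀ (r : ℝ), 0 ≤ r → ∀ y ∈ K, r • y ∈ K) (hKconv : Convex ℝ K)
    (Cstar : Set (X →L[ℝ] ℝ)) (hCstar : Cstar = {w : X →L[ℝ] ℝ | ∀ x ∈ C, 0 ≤ w x})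
    (Kstar : Set (Y →L[ℝ] ℝ)) (hKstar : Kstar = {z : Y →L[ℝ] ℝ | ∀ y ∈ K, 0 ≤ z y})
    -- data of the programs and consistency
    (c : X →L[ℝ] ℝ)
    -- the game G = (α,β,A) with α ∈ int C*, β ∈ int K*
    (α : X →L[ℝ] ℝ) (hα : α ∈ interior Cstar)
    (β : Y →L[ℝ] ℝ)
    (S : Set X) (hS : S = {x ∈ C | α x = 1})
    (T : Set Y) (hT : T = {y ∈ K | β y = 1})
    -- finite security levels (F3)
    (hSne : S.Nonempty) (hTne : T.Nonempty) :
    ((∃ y ∈ K, -(A.flip y) + c ∈ interior Cstar) ↔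
      (∀ x ∈ S, A x ∈ Kstar → 0 < c x)) := by
  subst hCstar hKstar hS hT
  have hC0 : (0 : X) ∈ C := zero_mem_of_smul_mem hCcone (hSne.mono fun _ hx => hx.1)
  have hK0 : (0 : Y) ∈ K := zero_mem_of_smul_mem hKcone (hTne.mono fun _ hy => hy.1)
  constructor
  · rintro ⟨y, hyK, hy⟩ x ⟨hxC, hαx⟩ hAx
    have hx0 : x ≠ 0 := by
      rintro rfl
      simp at hαx
    have hslack := pos_of_mem_interior_dualCone hy hxC hx0
    simp only [add_apply, neg_apply, ContinuousLinearMap.flip_apply] at hslack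
    linarith [hAx y hyK]
  · intro hpos
    by_contra hnsf
    obtain ⟨x, hxC, hαx, hAx, hcx⟩ := exists_primal_ray_of_not_strictlyFeasible hXrefl A hC0
      hCcone hCconv hCclosed hK0 hKcone hKconv hα hnsf
    have hr : 0 ≤ (α x)⁻¹ := inv_nonneg.2 hαx.le
    have hxS : (α x)⁻¹ • x ∈ {x ∈ C | α x = 1} :=
      ⟨hCcone _ hr x hxC, by simp [hαx.ne']⟩
    have hcpos := hpos _ hxS fun y hy => by simpa using mul_nonneg hr (hAx y hy)
    rw [map_smul, smul_eq_mul] at hcpos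
    exact (mul_nonpos_of_nonneg_of_nonpos hr hcx).not_gt hcpos

/-- Lemma 4.3, relation (4.5): if {(P),(D)} is consistent and the game
G = (α,β,A) has value v = 0, then (D) is strictly feasible iff every x ∈ S with
Ax ∈ K* satisfies ⟨c,x⟩ > 0. -/
theorem stmt13
    {X Y : Type*} [NormedAddCommGroup X] [NormedSpace ℝ X] [CompleteSpace X]
    [NormedAddCommGroup Y] [NormedSpace ℝ Y] [CompleteSpace Y]
    -- reflexivity of X and Y
    (hXrefl : Function.Surjective (NormedSpace.inclusionInDoubleDual ℝ X))
    (hYrefl : Function.Surjective (NormedSpace.inclusionInDoubleDual ℝ Y))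
    (A : X →L[ℝ] (Y →L[ℝ] ℝ))
    -- closed convex cones C, K with solid dual cones
    (C : Set X) (K : Set Y)
    (hCcone : ∀ (r : ℝ), 0 ≤ r → ∀ x ∈ C, r • x ∈ C) (hCconv : Convex ℝ C)
    (hCclosed : IsClosed C)
    (hKcone : ∀ (r : ℝ), 0 ≤ r → ∀ y ∈ K, r • y ∈ K) (hKconv : Convex ℝ K)
    (hKclosed : IsClosed K)
    (Cstar : Set (X →L[ℝ] ℝ)) (hCstar : Cstar = {w : X →L[ℝ] ℝ | ∀ x ∈ C, 0 ≤ w x})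
    (Kstar : Set (Y →L[ℝ] ℝ)) (hKstar : Kstar = {z : Y →L[ℝ] ℝ | ∀ y ∈ K, 0 ≤ z y})
    -- data of the programs and consistency
    (c : X →L[ℝ] ℝ) (b : Y →L[ℝ] ℝ)
    (FeasP : Set X) (hFeasP : FeasP = {x | x ∈ C ∧ A x - b ∈ Kstar})
    (FeasD : Set Y) (hFeasD : FeasD = {y | y ∈ K ∧ -(A.flip y) + c ∈ Cstar})
    (hPne : FeasP.Nonempty) (hDne : FeasD.Nonempty)
    -- the game G = (α,β,A) with α ∈ int C*, β ∈ int K*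
    (α : X →L[ℝ] ℝ) (hα : α ∈ interior Cstar)
    (β : Y →L[ℝ] ℝ) (hβ : β ∈ interior Kstar)
    (S : Set X) (hS : S = {x ∈ C | α x = 1})
    (T : Set Y) (hT : T = {y ∈ K | β y = 1})
    -- finite security levels (F3)
    (hSne : S.Nonempty) (hTne : T.Nonempty)
    (hbb : ∀ x ∈ S, BddBelow ((fun y => A x y) '' T))
    (hba : BddAbove ((fun x => sInf ((fun y => A x y) '' T)) '' S))
    (hba' : ∀ y ∈ T, BddAbove ((fun x => A x y) '' S))
    (hbb' : BddBelow ((fun y => sSup ((fun x => A x y) '' S)) '' T))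
    -- v is the value of the game
    (v : ℝ)
    (hv : v = sSup ((fun x => sInf ((fun y => A x y) '' T)) '' S))
    (hv' : v = sInf ((fun y => sSup ((fun x => A x y) '' S)) '' T))
    -- hypothesis: the game value is 0
    (hv0 : v = 0) :
    ((∃ y ∈ K, -(A.flip y) + c ∈ interior Cstar) ↔
      (∀ x ∈ S, A x ∈ Kstar → 0 < c x)) :=
  stmt13_general hXrefl A C K hCcone hCconv hCclosed hKcone hKconv Cstar hCstar Kstar hKstar c α hα
    β S hS T hT hSne hTne
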